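/- Let r ≥ 2 and m ≥ 2 be integers. Let S ⊆ A(r,m) be a pierced simplex, and for each l ∈ {1,…,r} let t_l > 0 be such that t_l·e_l ∈ conv(S). If i ∈ {1,…,r} is such that t_i = min{t_1,…,t_r}, then every point x ∈ C_i \ L_r lies strictly above S, i.e., ∑_{l=1}^r x_l/t_l > 1; in particular, the point t_i·e_i is an element of S. -/

import Mathlib

/-!
A point of `A(r,m)` has exactly one positive coordinate, at its colour, so the axis points
`t_l e_l ∈ conv S` force `S` to contain one point of each colour. These points form a triangular,
hence linearly independent, family, so `S` lies on the hyperplane `∑ x_l / t_l = 1` through the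
axis points. The coordinates of `a_{i,j,k}` sum to `(r - j) m + k` and all but the `i`-th are
nonpositive, so for `t_i` minimal `∑ x_l / t_l ≥ ((r - j) m + k) / t_i`. The point of colour `r`
in `S` lies on an axis, whence `t_i ≤ t_r ≤ m`: every point of colour `i` outside layer `r` is
strictly above `S`, so the point of colour `i` in `S` lies in layer `r`, i.e. on the `i`-th axis.
-/

/-- The point `a_{i,j,k}` of the construction `A(r,m)` (indices `i,j,k` are 1-based). -/
noncomputable def pt (r m i j k : ℕ) : Fin r → ℝ := fun l =>
  if (l : ℕ) + 1 = i then
    (∑ l' ∈ Finset.Icc (j + 1) r, (m : ℝ) ^ (2 * r - 2 * l' + 3))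
      + ((r - j : ℕ) : ℝ) * (m : ℝ) + (k : ℝ)
  else if j + 1 ≤ (l : ℕ) + 1 then
    -((m : ℝ) ^ (2 * r - 2 * ((l : ℕ) + 1) + 3))
  else 0

/-- The point set `A(r,m) ⊆ ℝ^r`. -/
def Apts (r m : ℕ) : Set (Fin r → ℝ) :=
  {x | ∃ i j k : ℕ, 1 ≤ i ∧ i ≤ j ∧ j ≤ r ∧ 1 ≤ k ∧ k ≤ m ∧ x = pt r m i j k}

/-- The set `C_i` of points of `A(r,m)` of color `i`. -/
def colorSet (r m i : ℕ) : Set (Fin r → ℝ) :=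
  {x | ∃ j k : ℕ, 1 ≤ i ∧ i ≤ j ∧ j ≤ r ∧ 1 ≤ k ∧ k ≤ m ∧ x = pt r m i j k}

/-- The set `L_j` of points of `A(r,m)` of layer `j`. -/
def layerSet (r m j : ℕ) : Set (Fin r → ℝ) :=
  {x | ∃ i k : ℕ, 1 ≤ i ∧ i ≤ j ∧ j ≤ r ∧ 1 ≤ k ∧ k ≤ m ∧ x = pt r m i j k}

/-- A set `S ⊆ ℝ^r` is pierced if its convex hull meets the line `ℝ·1_r`. -/
def Pierced {r : ℕ} (S : Set (Fin r → ℝ)) : Prop :=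
  ∃ c : ℝ, (fun _ => c : Fin r → ℝ) ∈ convexHull ℝ S

/-- The `i`-th standard basis vector of `ℝ^r` (1-based index). -/
def stdVec (r i : ℕ) : Fin r → ℝ := fun l => if (l : ℕ) + 1 = i then 1 else 0

open Finset

section Convexity

variable {E : Type*} [AddCommGroup E] [Module ℝ E] {S : Set E}

theorem exists_pos_of_mem_convexHull (f : E →ₗ[ℝ] ℝ) {y : E} (hy : y ∈ convexHull ℝ S)
    (hfy : 0 < f y) : ∃ x ∈ S, 0 < f x := by
  by_contra! h
  exact hfy.not_ge (convexHull_min h (convex_halfSpace_le f.isLinear 0) hy)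

theorem eq_of_mem_convexHull_of_forall_eq (f : E →ₗ[ℝ] ℝ) {c : ℝ} (hS : ∀ x ∈ S, f x = c)
    {y : E} (hy : y ∈ convexHull ℝ S) : f y = c :=
  convexHull_min hS (convex_hyperplane f.isLinear c) hy

end Convexity

theorem linearIndependent_of_upperTriangular {ι K : Type*} [Fintype ι] [LinearOrder ι] [Field K]
    (s : ι → ι → K) (hlt : ∀ p l, l < p → s p l = 0) (hdiag : ∀ p, s p p ≠ 0) :
    LinearIndependent K s := by
  have hM : (Matrix.of s).IsUpperTriangular := fun p l h => hlt p l h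
  refine Matrix.linearIndependent_rows_of_det_ne_zero (A := Matrix.of s) ?_
  rw [Matrix.det_of_isUpperTriangular hM]
  exact prod_ne_zero_iff.2 fun p _ => hdiag p

theorem LinearMap.apply_eq_sum_div {ι : Type*} [Fintype ι] [DecidableEq ι]
    (φ : (ι → ℝ) →ₗ[ℝ] ℝ) {t : ι → ℝ} (ht0 : ∀ l, t l ≠ 0)
    (ht : ∀ l, φ (t l • Pi.single l 1) = 1) (x : ι → ℝ) : φ x = ∑ l, x l / t l := by
  conv_lhs => rw [pi_eq_sum_univ' x, map_sum]
  refine sum_congr rfl fun l _ => ?_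
  have hl := ht l
  rw [map_smul, smul_eq_mul] at hl ⊢
  field_simp [ht0 l]
  linear_combination x l * hl

theorem sum_div_le_sum_div_of_nonpos {ι : Type*} [Fintype ι] {x t : ι → ℝ} {c : ι}
    (hx : ∀ l ≠ c, x l ≤ 0) (ht : ∀ l, 0 < t l) (hc : ∀ l, t c ≤ t l) :
    (∑ l, x l) / t c ≤ ∑ l, x l / t l := by
  rw [sum_div]
  refine sum_le_sum fun l _ => ?_
  rcases eq_or_ne l c with rfl | hl
  · rfl
  · rw [div_le_div_iff₀ (ht c) (ht l)]
    exact mul_le_mul_of_nonpos_left (hc l) (hx l hl)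

theorem exists_fin_eq_add_one {r c : ℕ} (hc : 1 ≤ c) (hcr : c ≤ r) : ∃ l : Fin r, c = l + 1 :=
  ⟨⟨c - 1, by omega⟩, (Nat.sub_add_cancel hc).symm⟩

theorem stdVec_add_one_eq_single {r : ℕ} (l : Fin r) : stdVec r (l + 1) = Pi.single l 1 := by
  ext p
  simp [stdVec, Pi.single_apply, Fin.ext_iff]

theorem sum_smul_stdVec_div {r c : ℕ} (hc : 1 ≤ c) (hcr : c ≤ r) (a : ℝ) (t : ℕ → ℝ) :
    ∑ l : Fin r, (a • stdVec r c) l / t (l + 1) = a / t c := by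
  obtain ⟨c, rfl⟩ := exists_fin_eq_add_one hc hcr
  simp [stdVec_add_one_eq_single, Pi.single_apply, ite_div]

noncomputable def ptDiag (r m j k : ℕ) : ℝ :=
  (∑ l ∈ Icc (j + 1) r, (m : ℝ) ^ (2 * r - 2 * l + 3)) + ((r - j : ℕ) : ℝ) * m + k

section Construction

variable {r m c j k : ℕ}

theorem pt_apply_of_eq {l : Fin r} (hl : (l : ℕ) + 1 = c) : pt r m c j k l = ptDiag r m j k := by
  simp [pt, ptDiag, hl]

theorem ptDiag_pos (hk : 1 ≤ k) : 0 < ptDiag r m j k := by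
  have hk' : 0 < k := hk
  unfold ptDiag
  positivity

theorem pt_apply_nonpos {l : Fin r} (hl : (l : ℕ) + 1 ≠ c) : pt r m c j k l ≤ 0 := by
  simp only [pt, if_neg hl]
  split_ifs
  · exact neg_nonpos.2 (by positivity)
  · rfl

theorem pt_apply_eq_zero {l : Fin r} (hl : (l : ℕ) + 1 ≠ c) (hlj : (l : ℕ) < j) :
    pt r m c j k l = 0 := by
  simp [pt, hl, hlj]

theorem pt_last_layer_eq_smul_stdVec : pt r m c r k = (k : ℝ) • stdVec r c := by
  ext l
  have : ¬ r + 1 ≤ (l : ℕ) + 1 := by omega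
  by_cases hl : (l : ℕ) + 1 = c <;> simp [pt, stdVec, hl, this]

theorem sum_pt (hc : 1 ≤ c) (hcj : c ≤ j) (hjr : j ≤ r) :
    ∑ l, pt r m c j k l = ((r - j : ℕ) : ℝ) * m + k := by
  set f : ℕ → ℝ := fun n => (m : ℝ) ^ (2 * r - 2 * n + 3)
  have hsplit : ∀ l : Fin r, pt r m c j k l =
      (if (l : ℕ) + 1 = c then ptDiag r m j k else 0) - (if j ≤ (l : ℕ) then f (l + 1) else 0) := by
    intro l
    by_cases hl : (l : ℕ) + 1 = c
    · simp [pt_apply_of_eq hl, hl, show ¬ j ≤ (l : ℕ) by omega]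
    · by_cases hjl : j ≤ (l : ℕ) <;> simp [pt, f, hl, hjl]
  have hdiag : ∑ l : Fin r, (if (l : ℕ) + 1 = c then ptDiag r m j k else 0) = ptDiag r m j k := by
    obtain ⟨c, rfl⟩ := exists_fin_eq_add_one hc (hcj.trans hjr)
    simp [Fin.val_inj]
  have htail : ∑ l : Fin r, (if j ≤ (l : ℕ) then f (l + 1) else 0) = ∑ n ∈ Icc (j + 1) r, f n := by
    rw [Fin.sum_univ_eq_sum_range (fun n => if j ≤ n then f (n + 1) else 0), ← sum_filter,
      ← Ico_add_one_right_eq_Icc, ← sum_Ico_add']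
    congr 1
    ext n
    simp only [mem_filter, mem_range, mem_Ico]
    omega
  rw [Finset.sum_congr rfl fun l _ => hsplit l, sum_sub_distrib, hdiag, htail, ptDiag]
  ring

theorem mem_colorSet_of_pos {x : Fin r → ℝ} (hx : x ∈ Apts r m) {l : Fin r} (hl : 0 < x l) :
    x ∈ colorSet r m (l + 1) := by
  obtain ⟨c, j, k, hc, hcj, hjr, hk, hkm, rfl⟩ := hx
  obtain rfl : (l : ℕ) + 1 = c := by
    by_contra hne
    exact (pt_apply_nonpos hne).not_gt hl
  exact ⟨j, k, hc, hcj, hjr, hk, hkm, rfl⟩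

theorem apply_pos_of_mem_colorSet {x : Fin r → ℝ} {l : Fin r} (hx : x ∈ colorSet r m (l + 1)) :
    0 < x l := by
  obtain ⟨j, k, -, -, -, hk, -, rfl⟩ := hx
  rw [pt_apply_of_eq rfl]
  exact ptDiag_pos hk

theorem apply_eq_zero_of_mem_colorSet {x : Fin r → ℝ} {l : Fin r} (hx : x ∈ colorSet r m c)
    (hlc : (l : ℕ) + 1 < c) : x l = 0 := by
  obtain ⟨j, k, -, hcj, -, -, -, rfl⟩ := hx
  exact pt_apply_eq_zero hlc.ne (by omega)

theorem one_lt_sum_pt_div {t : ℕ → ℝ} (ht : ∀ l : Fin r, 0 < t (l + 1))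
    (hmin : ∀ l : Fin r, t c ≤ t (l + 1)) (htm : t c ≤ m) (hc : 1 ≤ c) (hcj : c ≤ j)
    (hjr : j < r) (hk : 1 ≤ k) : 1 < ∑ l : Fin r, pt r m c j k l / t (l + 1) := by
  obtain ⟨c, rfl⟩ := exists_fin_eq_add_one hc (hcj.trans hjr.le)
  have hlayer : (m : ℝ) + 1 ≤ ((r - j : ℕ) : ℝ) * m + k := by
    have hrj : (1 : ℝ) ≤ ((r - j : ℕ) : ℝ) := by exact_mod_cast Nat.le_sub_of_add_le' hjr
    have hk' : (1 : ℝ) ≤ k := by exact_mod_cast hk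
    nlinarith [(m.cast_nonneg : (0 : ℝ) ≤ m)]
  calc 1 < (((r - j : ℕ) : ℝ) * m + k) / t (c + 1) := by
        rw [one_lt_div (ht c)]
        linarith
    _ = (∑ l, pt r m (c + 1) j k l) / t (c + 1) := by rw [sum_pt hc hcj hjr.le]
    _ ≤ ∑ l : Fin r, pt r m (c + 1) j k l / t (l + 1) :=
        sum_div_le_sum_div_of_nonpos (fun l hl => pt_apply_nonpos (by simpa [Fin.ext_iff] using hl))
          ht hmin

end Construction

section PiercedSimplex

variable {r m : ℕ} {S : Set (Fin r → ℝ)} {t : ℕ → ℝ}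

theorem exists_mem_colorSet (hSA : S ⊆ Apts r m) (ht : ∀ l : ℕ, 1 ≤ l → l ≤ r →
      0 < t l ∧ t l • stdVec r l ∈ convexHull ℝ S) (c : ℕ) (hc : 1 ≤ c) (hcr : c ≤ r) :
    ∃ x ∈ S, x ∈ colorSet r m c := by
  obtain ⟨l, rfl⟩ := exists_fin_eq_add_one hc hcr
  obtain ⟨htl, hmem⟩ := ht (l + 1) hc hcr
  obtain ⟨x, hxS, hxl⟩ := exists_pos_of_mem_convexHull (LinearMap.proj l) hmem
    (by simpa [stdVec] using htl)
  exact ⟨x, hxS, mem_colorSet_of_pos (hSA hxS) hxl⟩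

theorem sum_div_eq_one_of_mem (hSA : S ⊆ Apts r m) (hcard : S.ncard = r)
    (ht : ∀ l : ℕ, 1 ≤ l → l ≤ r → 0 < t l ∧ t l • stdVec r l ∈ convexHull ℝ S) {x : Fin r → ℝ}
    (hx : x ∈ S) : ∑ l : Fin r, x l / t (l + 1) = 1 := by
  classical
  choose s hsS hsC using fun l : Fin r => exists_mem_colorSet hSA ht (l + 1) (by omega) l.isLt
  have hli : LinearIndependent ℝ s := linearIndependent_of_upperTriangular s
    (fun _ _ hlp => apply_eq_zero_of_mem_colorSet (hsC _) (by simpa using hlp))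
    (fun p => (apply_pos_of_mem_colorSet (hsC p)).ne')
  have hfin : S.Finite := by
    rcases Nat.eq_zero_or_pos r with rfl | hr
    · exact Set.subsingleton_of_subsingleton.finite
    · exact Set.finite_of_ncard_pos (hcard.symm ▸ hr)
  have hrange : Set.range s = S := Set.eq_of_subset_of_ncard_le (Set.range_subset_iff.2 hsS)
    (by rw [hcard, Set.ncard_range_of_injective hli.injective, Nat.card_eq_fintype_card,
      Fintype.card_fin]) hfin
  set φ := (basisOfPiSpaceOfLinearIndependent hli).sumCoords
  have hφS : ∀ y ∈ S, φ y = 1 := by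
    rw [← hrange]
    rintro _ ⟨l, rfl⟩
    simpa [φ, coe_basisOfPiSpaceOfLinearIndependent] using
      (basisOfPiSpaceOfLinearIndependent hli).sumCoords_self_apply (i := l)
  have hφ := φ.apply_eq_sum_div (t := fun l : Fin r => t (l + 1))
    (fun l => (ht (l + 1) (by omega) l.isLt).1.ne')
    (fun l => eq_of_mem_convexHull_of_forall_eq φ hφS
      (by simpa [stdVec_add_one_eq_single] using (ht (l + 1) (by omega) l.isLt).2))
  rw [← hφ, hφS x hx]

theorem eq_of_pt_last_layer_mem (hSA : S ⊆ Apts r m) (hcard : S.ncard = r)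
    (ht : ∀ l : ℕ, 1 ≤ l → l ≤ r → 0 < t l ∧ t l • stdVec r l ∈ convexHull ℝ S) {c k : ℕ}
    (hc : 1 ≤ c) (hcr : c ≤ r) (hx : pt r m c r k ∈ S) : t c = k := by
  have hx1 := sum_div_eq_one_of_mem hSA hcard ht hx
  rw [pt_last_layer_eq_smul_stdVec, sum_smul_stdVec_div hc hcr] at hx1
  exact ((div_eq_one_iff_eq (ht c hc hcr).1.ne').1 hx1).symm

theorem t_last_le (hSA : S ⊆ Apts r m) (hcard : S.ncard = r)
    (ht : ∀ l : ℕ, 1 ≤ l → l ≤ r → 0 < t l ∧ t l • stdVec r l ∈ convexHull ℝ S) (hr : 1 ≤ r) :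
    t r ≤ m := by
  obtain ⟨x, hxS, j, k, -, hrj, hjr, -, hkm, rfl⟩ := exists_mem_colorSet hSA ht r hr le_rfl
  obtain rfl : j = r := le_antisymm hjr hrj
  rw [eq_of_pt_last_layer_mem hSA hcard ht hr le_rfl hxS]
  exact_mod_cast hkm

end PiercedSimplex

theorem min_axis_above_general
    (r m : ℕ)
    (S : Set (Fin r → ℝ)) (hSA : S ⊆ Apts r m) (hcard : S.ncard = r)
    (t : ℕ → ℝ) (ht : ∀ l : ℕ, 1 ≤ l → l ≤ r →
      0 < t l ∧ t l • stdVec r l ∈ convexHull ℝ S)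
    (i : ℕ) (hi1 : 1 ≤ i) (hir : i ≤ r)
    (hmin : ∀ l : ℕ, 1 ≤ l → l ≤ r → t i ≤ t l) :
    (∀ x ∈ colorSet r m i \ layerSet r m r,
      1 < ∑ l : Fin r, x l / t ((l : ℕ) + 1)) ∧
    t i • stdVec r i ∈ S := by
  have htm : t i ≤ m :=
    (hmin r (by omega) le_rfl).trans (t_last_le hSA hcard ht (by omega))
  have habove : ∀ j k, i ≤ j → j < r → 1 ≤ k → 1 < ∑ l : Fin r, pt r m i j k l / t (l + 1) :=
    fun j k hij hjr hk => one_lt_sum_pt_div (fun l => (ht _ (by omega) l.isLt).1)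
      (fun l => hmin _ (by omega) l.isLt) htm hi1 hij hjr hk
  refine ⟨?_, ?_⟩
  · rintro x ⟨⟨j, k, -, hij, hjr, hk, hkm, rfl⟩, hxL⟩
    refine habove j k hij (hjr.lt_of_ne ?_) hk
    rintro rfl
    exact hxL ⟨i, k, hi1, hij, le_rfl, hk, hkm, rfl⟩
  · obtain ⟨x, hxS, j, k, -, hij, hjr, hk, -, rfl⟩ := exists_mem_colorSet hSA ht i hi1 hir
    obtain rfl : j = r := hjr.eq_or_lt.resolve_right fun hjr =>
      (habove j k hij hjr hk).ne' (sum_div_eq_one_of_mem hSA hcard ht hxS)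
    rwa [eq_of_pt_last_layer_mem hSA hcard ht hi1 hir hxS, ← pt_last_layer_eq_smul_stdVec]

/-- if `t_i` is minimal, then all points of `C_i \ L_r` lie strictly above `S`;
in particular `t_i • e_i ∈ S`. -/
theorem min_axis_above
    (r m : ℕ) (hr : 2 ≤ r) (hm : 2 ≤ m)
    (S : Set (Fin r → ℝ)) (hSA : S ⊆ Apts r m) (hS : Pierced S) (hcard : S.ncard = r)
    (t : ℕ → ℝ) (ht : ∀ l : ℕ, 1 ≤ l → l ≤ r →
      0 < t l ∧ t l • stdVec r l ∈ convexHull ℝ S)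
    (i : ℕ) (hi1 : 1 ≤ i) (hir : i ≤ r)
    (hmin : ∀ l : ℕ, 1 ≤ l → l ≤ r → t i ≤ t l) :
    (∀ x ∈ colorSet r m i \ layerSet r m r,
      1 < ∑ l : Fin r, x l / t ((l : ℕ) + 1)) ∧
    t i • stdVec r i ∈ S :=
  min_axis_above_general r m S hSA hcard t ht i hi1 hir hmin
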